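/- arXiv:2504.04674 — 4 statements merged into one kernel-verified Lean document; each statement's English description precedes it below -/
import Mathlib

section
/- Let a = 1/2, M = 1, r = √3/2, and let θ be any real number with 0 < θ < π. Then ρ = [4r⁶ csc θ (a² + r²) + 2a²r⁵ sin θ (M − r)] / (Π³ Φ [a⁴ + 2r⁴ + a²r(2M + 3r) + a²Δ cos 2θ]) > 0, where Δ = r² − 2Mr + a², Π = √(a² + 2r² + a² cos 2θ), Φ = √((a² + r²)² csc²θ − a²Δ). That is, on the 2-surface r = √3/2 the outgoing convergence of the adapted null tetrad is strictly positive everywhere. -/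
/-!
Each factor of `ρ` is positive as soon as `0 < r ≤ M` and `sin θ > 0`, whatever `a` is.
The numerator is a sum of two positive terms because `M - r ≥ 0`.
`Π² = 2(r² + a² cos² θ)`; `Φ² ≥ (a² + r²)² - a²Δ = r²(a² + r²) + 2Ma²r` since `csc² θ ≥ 1`.
The last factor is affine in `cos 2θ ∈ [-1, 1]`, and equals `2(a² + r²)²` at `cos 2θ = 1`
and `2r²(a² + r²) + 4Ma²r` at `cos 2θ = -1`.
-/

namespace Kerr

noncomputable def rho (a M r θ : ℝ) : ℝ :=
  (4 * r ^ 6 * (1 / Real.sin θ) * (a ^ 2 + r ^ 2) +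
      2 * a ^ 2 * r ^ 5 * Real.sin θ * (M - r)) /
    ((Real.sqrt (a ^ 2 + 2 * r ^ 2 + a ^ 2 * Real.cos (2 * θ))) ^ 3 *
      Real.sqrt ((a ^ 2 + r ^ 2) ^ 2 / Real.sin θ ^ 2 -
        a ^ 2 * (r ^ 2 - 2 * M * r + a ^ 2)) *
      (a ^ 4 + 2 * r ^ 4 + a ^ 2 * r * (2 * M + 3 * r) +
        a ^ 2 * (r ^ 2 - 2 * M * r + a ^ 2) * Real.cos (2 * θ)))

variable {a M r : ℝ}

theorem rho_numerator_pos {s : ℝ} (hr : 0 < r) (hrM : r ≤ M) (hs : 0 < s) :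
    0 < 4 * r ^ 6 * (1 / s) * (a ^ 2 + r ^ 2) + 2 * a ^ 2 * r ^ 5 * s * (M - r) := by
  have hfirst : 0 < 4 * r ^ 6 * (1 / s) * (a ^ 2 + r ^ 2) := by positivity
  have hsecond : 0 ≤ 2 * a ^ 2 * r ^ 5 * s * (M - r) := by
    have : 0 ≤ M - r := sub_nonneg.mpr hrM
    positivity
  linarith

theorem Pi_sq_pos {c : ℝ} (hr : 0 < r) (hc : -1 ≤ c) :
    0 < a ^ 2 + 2 * r ^ 2 + a ^ 2 * c := by
  nlinarith [mul_nonneg (sq_nonneg a) (neg_le_iff_add_nonneg'.mp hc), pow_pos hr 2]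

theorem Phi_sq_pos {s : ℝ} (hr : 0 < r) (hM : 0 ≤ M) (hs0 : s ≠ 0) (hs1 : s ^ 2 ≤ 1) :
    0 < (a ^ 2 + r ^ 2) ^ 2 / s ^ 2 - a ^ 2 * (r ^ 2 - 2 * M * r + a ^ 2) := by
  have hcsc : (a ^ 2 + r ^ 2) ^ 2 ≤ (a ^ 2 + r ^ 2) ^ 2 / s ^ 2 :=
    le_div_self (by positivity) (by positivity) hs1
  nlinarith [mul_nonneg (mul_nonneg (sq_nonneg a) hM) hr.le, pow_pos hr 4,
    mul_nonneg (sq_nonneg a) (sq_nonneg r)]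

theorem last_factor_pos {c : ℝ} (hr : 0 < r) (hM : 0 ≤ M) (hc1 : -1 ≤ c) (hc2 : c ≤ 1) :
    0 < a ^ 4 + 2 * r ^ 4 + a ^ 2 * r * (2 * M + 3 * r) +
      a ^ 2 * (r ^ 2 - 2 * M * r + a ^ 2) * c := by
  have hat_one : 0 < 2 * (a ^ 2 + r ^ 2) ^ 2 := by positivity
  have hat_neg_one : 0 < 2 * r ^ 2 * (a ^ 2 + r ^ 2) + 4 * M * a ^ 2 * r := by positivity
  have hcomb : a ^ 4 + 2 * r ^ 4 + a ^ 2 * r * (2 * M + 3 * r) +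
      a ^ 2 * (r ^ 2 - 2 * M * r + a ^ 2) * c =
      (1 + c) / 2 * (2 * (a ^ 2 + r ^ 2) ^ 2) +
        (1 - c) / 2 * (2 * r ^ 2 * (a ^ 2 + r ^ 2) + 4 * M * a ^ 2 * r) := by
    ring
  rw [hcomb]
  rcases hc1.eq_or_lt with rfl | hc1
  · norm_num [hat_neg_one]
  · have : 0 ≤ 1 - c := sub_nonneg.mpr hc2
    have : 0 < 1 + c := by linarith
    positivity

theorem rho_pos {θ : ℝ} (hr : 0 < r) (hrM : r ≤ M) (hθ1 : 0 < θ) (hθ2 : θ < Real.pi) :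
    0 < rho a M r θ := by
  have hs : 0 < Real.sin θ := Real.sin_pos_of_pos_of_lt_pi hθ1 hθ2
  have hs1 : Real.sin θ ^ 2 ≤ 1 := by nlinarith [Real.sin_le_one θ]
  have hM : 0 ≤ M := hr.le.trans hrM
  have hc1 := Real.neg_one_le_cos (2 * θ)
  have hc2 := Real.cos_le_one (2 * θ)
  have hPi := Real.sqrt_pos.mpr (Pi_sq_pos (a := a) hr hc1)
  have hPhi := Real.sqrt_pos.mpr (Phi_sq_pos (a := a) hr hM hs.ne' hs1)
  exact div_pos (rho_numerator_pos hr hrM hs)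
    (mul_pos (mul_pos (pow_pos hPi 3) hPhi) (last_factor_pos hr hM hc1 hc2))

end Kerr

theorem kerr_rho_pos_on_trapped_surface_general (a M r θ : ℝ)
    (hM : M = 1) (hr : r = Real.sqrt 3 / 2)
    (hθ1 : 0 < θ) (hθ2 : θ < Real.pi) :
    0 < (4 * r ^ 6 * (1 / Real.sin θ) * (a ^ 2 + r ^ 2) +
          2 * a ^ 2 * r ^ 5 * Real.sin θ * (M - r)) /
        ((Real.sqrt (a ^ 2 + 2 * r ^ 2 + a ^ 2 * Real.cos (2 * θ))) ^ 3 *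
          Real.sqrt ((a ^ 2 + r ^ 2) ^ 2 / Real.sin θ ^ 2 -
            a ^ 2 * (r ^ 2 - 2 * M * r + a ^ 2)) *
          (a ^ 4 + 2 * r ^ 4 + a ^ 2 * r * (2 * M + 3 * r) +
            a ^ 2 * (r ^ 2 - 2 * M * r + a ^ 2) * Real.cos (2 * θ))) := by
  subst hM hr
  have hsqrt3_lt : Real.sqrt 3 < 2 := by
    rw [Real.sqrt_lt' two_pos]; norm_num
  exact Kerr.rho_pos (by positivity) (by linarith) hθ1 hθ2

/-- For the Kerr parameters `a = 1/2`, `M = 1` and the 2-surface `r = √3/2`,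
the outgoing convergence
`ρ = [4r⁶ csc θ (a² + r²) + 2a²r⁵ sin θ (M − r)] / (Π³ Φ [a⁴ + 2r⁴ + a²r(2M + 3r) + a²Δ cos 2θ])`
of the adapted null tetrad is strictly positive for every `0 < θ < π`. -/
theorem kerr_rho_pos_on_trapped_surface (a M r θ : ℝ)
    (ha : a = 1 / 2) (hM : M = 1) (hr : r = Real.sqrt 3 / 2)
    (hθ1 : 0 < θ) (hθ2 : θ < Real.pi) :
    0 < (4 * r ^ 6 * (1 / Real.sin θ) * (a ^ 2 + r ^ 2) +
          2 * a ^ 2 * r ^ 5 * Real.sin θ * (M - r)) /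
        ((Real.sqrt (a ^ 2 + 2 * r ^ 2 + a ^ 2 * Real.cos (2 * θ))) ^ 3 *
          Real.sqrt ((a ^ 2 + r ^ 2) ^ 2 / Real.sin θ ^ 2 -
            a ^ 2 * (r ^ 2 - 2 * M * r + a ^ 2)) *
          (a ^ 4 + 2 * r ^ 4 + a ^ 2 * r * (2 * M + 3 * r) +
            a ^ 2 * (r ^ 2 - 2 * M * r + a ^ 2) * Real.cos (2 * θ))) :=
  kerr_rho_pos_on_trapped_surface_general a M r θ hM hr hθ1 hθ2
end

section
/- Let a = 1/2, M = 1, r = √3/2, and let θ be any real number with 0 < θ < π. Then ρ′ = −Δ Π⁵ [4r³ + a²(M + 3r) + a² cos(2θ)(r − M)] · [a⁴ + 2r⁴ + a²r(2M + 3r) + a²Δ cos 2θ] / (64 r⁵ Σ² Φ³ sin³θ) > 0, where Σ = r² + a² cos²θ, Δ = r² − 2Mr + a², Π = √(a² + 2r² + a² cos 2θ), Φ = √((a² + r²)² csc²θ − a²Δ). That is, on the 2-surface r = √3/2 the ingoing convergence of the adapted null tetrad is strictly positive everywhere. -/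
/-!
Between the horizons `Δ < 0`, and every other factor of `ρ′` has a fixed sign for any `r > 0`,
`M ≥ 0` and `0 < θ < π`: the two brackets are affine in `cos 2θ ∈ [-1, 1]` and positive at both
endpoints, `Π² = 2Σ > 0`, and `Φ² ≥ (a² + r²)² - a²Δ = r⁴ + a²r² + 2a²Mr > 0` since `sin² θ ≤ 1`.
Hence `ρ′ > 0` exactly where `Δ < 0`, and for `a = 1/2`, `M = 1`, `r = √3/2` one has `Δ = 1 - √3`.
-/

open Real Set

noncomputable section

def kerrDelta (a M r : ℝ) : ℝ := r ^ 2 - 2 * M * r + a ^ 2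

def kerrRhoPrime (a M r θ : ℝ) : ℝ :=
  -(kerrDelta a M r * (√(a ^ 2 + 2 * r ^ 2 + a ^ 2 * cos (2 * θ))) ^ 5 *
      (4 * r ^ 3 + a ^ 2 * (M + 3 * r) + a ^ 2 * cos (2 * θ) * (r - M)) *
      (a ^ 4 + 2 * r ^ 4 + a ^ 2 * r * (2 * M + 3 * r) + a ^ 2 * kerrDelta a M r * cos (2 * θ))) /
    (64 * r ^ 5 * (r ^ 2 + a ^ 2 * cos θ ^ 2) ^ 2 *
      (√((a ^ 2 + r ^ 2) ^ 2 / sin θ ^ 2 - a ^ 2 * kerrDelta a M r)) ^ 3 * sin θ ^ 3)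

end

section

variable {a M r c : ℝ}

theorem kerr_first_factor_pos (hr : 0 < r) (hM : 0 ≤ M) (hc : c ∈ Icc (-1) 1) :
    0 < 4 * r ^ 3 + a ^ 2 * (M + 3 * r) + a ^ 2 * c * (r - M) := by
  obtain ⟨hc₁, hc₂⟩ := hc
  -- the bracket is `4r³ + a²r(3 + c) + a²M(1 - c)`
  have h₁ : 0 ≤ a ^ 2 * (r * (3 + c)) :=
    mul_nonneg (sq_nonneg a) (mul_nonneg hr.le (by linarith))
  have h₂ : 0 ≤ a ^ 2 * (M * (1 - c)) :=
    mul_nonneg (sq_nonneg a) (mul_nonneg hM (by linarith))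
  nlinarith [pow_pos hr 3]

theorem kerr_second_factor_pos (hr : 0 < r) (hM : 0 ≤ M) (hc : c ∈ Icc (-1) 1) :
    0 < a ^ 4 + 2 * r ^ 4 + a ^ 2 * r * (2 * M + 3 * r) + a ^ 2 * kerrDelta a M r * c := by
  obtain ⟨hc₁, hc₂⟩ := hc
  unfold kerrDelta
  -- values `2(a² + r²)²` at `c = 1` and `2r(r³ + a²r + 2a²M)` at `c = -1`
  have h₁ : 0 < 2 * (a ^ 2 + r ^ 2) ^ 2 := by positivity
  have h₂ : 0 < 2 * r * (r ^ 3 + a ^ 2 * r + 2 * a ^ 2 * M) := by positivity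
  nlinarith [mul_nonneg (sub_nonneg.2 hc₂) h₂.le, mul_nonneg (neg_le_iff_add_nonneg.1 hc₁) h₁.le]

theorem kerr_phi_sq_pos (hr : 0 < r) (hM : 0 ≤ M) {s : ℝ} (hs₀ : s ≠ 0) (hs₁ : s ^ 2 ≤ 1) :
    0 < (a ^ 2 + r ^ 2) ^ 2 / s ^ 2 - a ^ 2 * kerrDelta a M r := by
  have hs : 0 < s ^ 2 := by positivity
  have hle : (a ^ 2 + r ^ 2) ^ 2 ≤ (a ^ 2 + r ^ 2) ^ 2 / s ^ 2 :=
    le_div_self (by positivity) hs hs₁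
  have hpos : 0 < (a ^ 2 + r ^ 2) ^ 2 - a ^ 2 * kerrDelta a M r := by
    have : 0 < r ^ 4 + a ^ 2 * r ^ 2 + 2 * a ^ 2 * M * r := by positivity
    unfold kerrDelta
    linarith
  linarith

theorem kerrRhoPrime_pos_of_kerrDelta_neg {θ : ℝ} (hr : 0 < r) (hM : 0 ≤ M) (hθ : 0 < sin θ)
    (hΔ : kerrDelta a M r < 0) : 0 < kerrRhoPrime a M r θ := by
  have hc : cos (2 * θ) ∈ Icc (-1) 1 := ⟨neg_one_le_cos _, cos_le_one _⟩
  have hPi : 0 < a ^ 2 + 2 * r ^ 2 + a ^ 2 * cos (2 * θ) := by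
    rw [cos_two_mul]
    nlinarith [mul_nonneg (sq_nonneg a) (sq_nonneg (cos θ))]
  have hΦ := kerr_phi_sq_pos (a := a) hr hM hθ.ne' (sin_sq_le_one θ)
  have h₁ := kerr_first_factor_pos (a := a) hr hM hc
  have h₂ := kerr_second_factor_pos (a := a) hr hM hc
  unfold kerrRhoPrime
  rw [← neg_mul, ← neg_mul, ← neg_mul]
  have hnegΔ := neg_pos.2 hΔ
  positivity

end

/-- For the Kerr parameters `a = 1/2`, `M = 1` and the 2-surface `r = √3/2`,
the ingoing convergence
`ρ′ = −Δ Π⁵ [4r³ + a²(M + 3r) + a² cos(2θ)(r − M)] · [a⁴ + 2r⁴ + a²r(2M + 3r) + a²Δ cos 2θ] / (64 r⁵ Σ² Φ³ sin³θ)`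
of the adapted null tetrad is strictly positive for every `0 < θ < π`. -/
theorem kerr_rhoprime_pos_on_trapped_surface (a M r θ : ℝ)
    (ha : a = 1 / 2) (hM : M = 1) (hr : r = Real.sqrt 3 / 2)
    (hθ1 : 0 < θ) (hθ2 : θ < Real.pi) :
    0 < -((r ^ 2 - 2 * M * r + a ^ 2) *
          (Real.sqrt (a ^ 2 + 2 * r ^ 2 + a ^ 2 * Real.cos (2 * θ))) ^ 5 *
          (4 * r ^ 3 + a ^ 2 * (M + 3 * r) + a ^ 2 * Real.cos (2 * θ) * (r - M)) *
          (a ^ 4 + 2 * r ^ 4 + a ^ 2 * r * (2 * M + 3 * r) +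
            a ^ 2 * (r ^ 2 - 2 * M * r + a ^ 2) * Real.cos (2 * θ))) /
        (64 * r ^ 5 * (r ^ 2 + a ^ 2 * Real.cos θ ^ 2) ^ 2 *
          (Real.sqrt ((a ^ 2 + r ^ 2) ^ 2 / Real.sin θ ^ 2 -
            a ^ 2 * (r ^ 2 - 2 * M * r + a ^ 2))) ^ 3 *
          Real.sin θ ^ 3) := by
  subst ha hM hr
  have hs : √3 ^ 2 = 3 := sq_sqrt (by norm_num)
  have hΔ : kerrDelta (1 / 2) 1 (√3 / 2) < 0 := by
    unfold kerrDelta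
    nlinarith [sqrt_nonneg 3]
  exact kerrRhoPrime_pos_of_kerrDelta_neg (by positivity) zero_le_one
    (sin_pos_of_pos_of_lt_pi hθ1 hθ2) hΔ
end

section
/- Let M, a, r, θ be real numbers with r > 0, 0 < θ < π, Σ = r² + a² cos²θ > 0, Δ = r² − 2Mr + a² ≠ 0, and (a² + r²)² − a²Δ sin²θ > 0. Define Π = √(a² + 2r² + a² cos 2θ), Φ = √((a² + r²)² csc²θ − a²Δ), and the vector l = (1/(2r⁵)) · (Π[a²Δ sin²θ − (a² + r²)²], ΔΠΦ sin θ, 0, −2raMΠ) with components in the order (t, r, θ, φ). Then g_tt (lᵗ)² + g_rr (lʳ)² + 2 g_tφ lᵗ lᵠ + g_φφ (lᵠ)² = 0; that is, the tetrad vector l is null with respect to the Boyer–Lindquist Kerr metric. -/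
/-!
Write `A = (a² + r²)² − a²Δ sin²θ`. Up to the common factor `Π/(2r⁵)`, the `(t, φ)` part of `l`
is `−(A, 2raM)`, which is `ΣΔ` times the `t`-row `(g^tt, g^tφ) = −(A, 2raM)/(ΣΔ)` of the inverse
Kerr metric; its norm is therefore `(ΣΔ)² g^tt = −ΣΔA`. Since `Φ² sin²θ = A`, the radial part
contributes `(Σ/Δ) Δ² A`, which cancels it exactly.
-/

theorem sq_sqrt_div_sq_sub_mul_sq {B C s : ℝ} (hs : s ≠ 0) (h : 0 ≤ B - C * s ^ 2) :
    Real.sqrt (B / s ^ 2 - C) ^ 2 * s ^ 2 = B - C * s ^ 2 := by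
  have hdiv : B / s ^ 2 - C = (B - C * s ^ 2) / s ^ 2 := by field_simp
  rw [hdiv, Real.sq_sqrt (by positivity)]
  field_simp

theorem kerr_tφ_norm_eq {M a r θ S Δ A : ℝ}
    (hS : S = r ^ 2 + a ^ 2 * Real.cos θ ^ 2) (hS0 : S ≠ 0)
    (hΔ : Δ = r ^ 2 - 2 * M * r + a ^ 2)
    (hA : A = (a ^ 2 + r ^ 2) ^ 2 - a ^ 2 * Δ * Real.sin θ ^ 2) :
    -(1 - 2 * M * r / S) * A ^ 2 +
      2 * (-(2 * M * r * a * Real.sin θ ^ 2 / S)) * A * (2 * r * a * M) +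
      ((r ^ 2 + a ^ 2 + 2 * M * r * a ^ 2 * Real.sin θ ^ 2 / S) * Real.sin θ ^ 2) *
        (2 * r * a * M) ^ 2
      = -(S * Δ * A) := by
  have hsin : Real.sin θ ^ 2 = 1 - Real.cos θ ^ 2 := by linarith [Real.sin_sq_add_cos_sq θ]
  rw [hA, hsin, hΔ]
  field_simp
  rw [hS]
  ring

theorem kerr_tetrad_l_null_general (M a r θ : ℝ)
    (hθ1 : 0 < θ) (hθ2 : θ < Real.pi)
    (S Δ P Φ lt lr lφ : ℝ)
    (hS : S = r ^ 2 + a ^ 2 * Real.cos θ ^ 2) (hSpos : 0 < S)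
    (hΔ : Δ = r ^ 2 - 2 * M * r + a ^ 2) (hΔne : Δ ≠ 0)
    (hA : 0 < (a ^ 2 + r ^ 2) ^ 2 - a ^ 2 * Δ * Real.sin θ ^ 2)
    (hΦ : Φ = Real.sqrt ((a ^ 2 + r ^ 2) ^ 2 / Real.sin θ ^ 2 - a ^ 2 * Δ))
    (hlt : lt = 1 / (2 * r ^ 5) * (P * (a ^ 2 * Δ * Real.sin θ ^ 2 - (a ^ 2 + r ^ 2) ^ 2)))
    (hlr : lr = 1 / (2 * r ^ 5) * (Δ * P * Φ * Real.sin θ))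
    (hlφ : lφ = 1 / (2 * r ^ 5) * (-2 * r * a * M * P)) :
    -(1 - 2 * M * r / S) * lt ^ 2 + (S / Δ) * lr ^ 2 +
      2 * (-(2 * M * r * a * Real.sin θ ^ 2 / S)) * lt * lφ +
      ((r ^ 2 + a ^ 2 + 2 * M * r * a ^ 2 * Real.sin θ ^ 2 / S) * Real.sin θ ^ 2) * lφ ^ 2
      = 0 := by
  set A := (a ^ 2 + r ^ 2) ^ 2 - a ^ 2 * Δ * Real.sin θ ^ 2 with hA_def
  have hsin : Real.sin θ ≠ 0 := (Real.sin_pos_of_pos_of_lt_pi hθ1 hθ2).ne'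
  have hΦ2 : Φ ^ 2 * Real.sin θ ^ 2 = A := by
    rw [hΦ, sq_sqrt_div_sq_sub_mul_sq hsin (by linarith)]
  have htφ := kerr_tφ_norm_eq (M := M) hS hSpos.ne' hΔ hA_def
  calc _ = (P / (2 * r ^ 5)) ^ 2 *
        ((-(1 - 2 * M * r / S) * A ^ 2 +
          2 * (-(2 * M * r * a * Real.sin θ ^ 2 / S)) * A * (2 * r * a * M) +
          ((r ^ 2 + a ^ 2 + 2 * M * r * a ^ 2 * Real.sin θ ^ 2 / S) * Real.sin θ ^ 2) *
            (2 * r * a * M) ^ 2) + S / Δ * Δ ^ 2 * (Φ ^ 2 * Real.sin θ ^ 2)) := by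
        rw [hlt, hlr, hlφ]; ring
    _ = 0 := by rw [htφ, hΦ2, sq Δ, ← mul_assoc, div_mul_cancel₀ S hΔne]; ring

/-- The tetrad vector
`l = (1/(2r⁵)) (Π[a²Δ sin²θ − (a² + r²)²], ΔΠΦ sin θ, 0, −2raMΠ)` is null with
respect to the Boyer–Lindquist Kerr metric:
`g_tt (lᵗ)² + g_rr (lʳ)² + 2 g_tφ lᵗ lᵠ + g_φφ (lᵠ)² = 0`. -/
theorem kerr_tetrad_l_null (M a r θ : ℝ)
    (hr : 0 < r) (hθ1 : 0 < θ) (hθ2 : θ < Real.pi)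
    (S Δ P Φ lt lr lφ : ℝ)
    (hS : S = r ^ 2 + a ^ 2 * Real.cos θ ^ 2) (hSpos : 0 < S)
    (hΔ : Δ = r ^ 2 - 2 * M * r + a ^ 2) (hΔne : Δ ≠ 0)
    (hA : 0 < (a ^ 2 + r ^ 2) ^ 2 - a ^ 2 * Δ * Real.sin θ ^ 2)
    (hP : P = Real.sqrt (a ^ 2 + 2 * r ^ 2 + a ^ 2 * Real.cos (2 * θ)))
    (hΦ : Φ = Real.sqrt ((a ^ 2 + r ^ 2) ^ 2 / Real.sin θ ^ 2 - a ^ 2 * Δ))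
    (hlt : lt = 1 / (2 * r ^ 5) * (P * (a ^ 2 * Δ * Real.sin θ ^ 2 - (a ^ 2 + r ^ 2) ^ 2)))
    (hlr : lr = 1 / (2 * r ^ 5) * (Δ * P * Φ * Real.sin θ))
    (hlφ : lφ = 1 / (2 * r ^ 5) * (-2 * r * a * M * P)) :
    -(1 - 2 * M * r / S) * lt ^ 2 + (S / Δ) * lr ^ 2 +
      2 * (-(2 * M * r * a * Real.sin θ ^ 2 / S)) * lt * lφ +
      ((r ^ 2 + a ^ 2 + 2 * M * r * a ^ 2 * Real.sin θ ^ 2 / S) * Real.sin θ ^ 2) * lφ ^ 2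
      = 0 :=
  kerr_tetrad_l_null_general M a r θ hθ1 hθ2 S Δ P Φ lt lr lφ hS hSpos hΔ hΔne hA hΦ hlt hlr hlφ
end

section
/- Let M, a, r, θ be real numbers with r > 0, 0 < θ < π, and Σ = r² + a² cos²θ > 0. Define Π = √(a² + 2r² + a² cos 2θ) and the vector l = (1/(2r⁵)) · (Π[a²Δ sin²θ − (a² + r²)²], ΔΠΦ sin θ, 0, −2raMΠ) with Δ = r² − 2Mr + a², Φ = √((a² + r²)² csc²θ − a²Δ), components in the order (t, r, θ, φ). Then g_tφ lᵗ + g_φφ lᵠ = 0 and g_θθ lᶿ = 0; that is, l is orthogonal to the coordinate vector fields ∂_φ and ∂_θ, and hence orthogonal to the 2-surfaces of constant t and r. -/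
/-!
With `A = a²Δ sin²θ − (a² + r²)²`, the Kerr identity `Σ g_φφ = −A sin²θ` gives
`Σ (g_tφ A − 2raM g_φφ) = −2Mra sin²θ · A − 2raM Σ g_φφ = 0`, so `(lᵗ, lᵠ) ∝ (A, −2raM)` is
`g`-orthogonal to `∂_φ`.
-/

open Real

theorem kerr_sigma_mul_g_φφ {M a r θ S : ℝ} (hS : S = r ^ 2 + a ^ 2 * cos θ ^ 2) (hS0 : S ≠ 0) :
    S * ((r ^ 2 + a ^ 2 + 2 * M * r * a ^ 2 * sin θ ^ 2 / S) * sin θ ^ 2) =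
      ((a ^ 2 + r ^ 2) ^ 2 - a ^ 2 * (r ^ 2 - 2 * M * r + a ^ 2) * sin θ ^ 2) * sin θ ^ 2 := by
  field_simp
  rw [hS]
  linear_combination (a ^ 2 * (r ^ 2 + a ^ 2) * sin θ ^ 2) * sin_sq_add_cos_sq θ

theorem kerr_g_tφ_mul_add_g_φφ_mul_eq_zero {M a r θ S : ℝ}
    (hS : S = r ^ 2 + a ^ 2 * cos θ ^ 2) (hS0 : S ≠ 0) :
    -(2 * M * r * a * sin θ ^ 2 / S) *
        (a ^ 2 * (r ^ 2 - 2 * M * r + a ^ 2) * sin θ ^ 2 - (a ^ 2 + r ^ 2) ^ 2) +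
      (r ^ 2 + a ^ 2 + 2 * M * r * a ^ 2 * sin θ ^ 2 / S) * sin θ ^ 2 * (-2 * r * a * M) = 0 := by
  linear_combination (norm := (field_simp; ring))
    (-2 * r * a * M / S) * kerr_sigma_mul_g_φφ (M := M) hS hS0

theorem kerr_tetrad_l_orthogonal_to_surface_general (M a r θ : ℝ)
    (S Δ P lt lθ lφ : ℝ)
    (hS : S = r ^ 2 + a ^ 2 * Real.cos θ ^ 2) (hSpos : 0 < S)
    (hΔ : Δ = r ^ 2 - 2 * M * r + a ^ 2)
    (hlt : lt = 1 / (2 * r ^ 5) * (P * (a ^ 2 * Δ * Real.sin θ ^ 2 - (a ^ 2 + r ^ 2) ^ 2)))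
    (hlθ : lθ = 0)
    (hlφ : lφ = 1 / (2 * r ^ 5) * (-2 * r * a * M * P)) :
    (-(2 * M * r * a * Real.sin θ ^ 2 / S)) * lt +
      ((r ^ 2 + a ^ 2 + 2 * M * r * a ^ 2 * Real.sin θ ^ 2 / S) * Real.sin θ ^ 2) * lφ = 0 ∧
    S * lθ = 0 := by
  subst hlt hlθ hlφ hΔ
  exact ⟨by linear_combination (1 / (2 * r ^ 5) * P) *
      kerr_g_tφ_mul_add_g_φφ_mul_eq_zero (M := M) hS hSpos.ne', mul_zero S⟩

/-- The tetrad vector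
`l = (1/(2r⁵)) (Π[a²Δ sin²θ − (a² + r²)²], ΔΠΦ sin θ, 0, −2raMΠ)` is orthogonal
to the coordinate vector fields `∂_φ` and `∂_θ` of the Boyer–Lindquist Kerr
metric: `g_tφ lᵗ + g_φφ lᵠ = 0` and `g_θθ lᶿ = 0`, hence orthogonal to the
2-surfaces of constant `t` and `r`. -/
theorem kerr_tetrad_l_orthogonal_to_surface (M a r θ : ℝ)
    (hr : 0 < r) (hθ1 : 0 < θ) (hθ2 : θ < Real.pi)
    (S Δ P Φ lt lθ lφ : ℝ)
    (hS : S = r ^ 2 + a ^ 2 * Real.cos θ ^ 2) (hSpos : 0 < S)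
    (hΔ : Δ = r ^ 2 - 2 * M * r + a ^ 2)
    (hP : P = Real.sqrt (a ^ 2 + 2 * r ^ 2 + a ^ 2 * Real.cos (2 * θ)))
    (hΦ : Φ = Real.sqrt ((a ^ 2 + r ^ 2) ^ 2 / Real.sin θ ^ 2 - a ^ 2 * Δ))
    (hlt : lt = 1 / (2 * r ^ 5) * (P * (a ^ 2 * Δ * Real.sin θ ^ 2 - (a ^ 2 + r ^ 2) ^ 2)))
    (hlθ : lθ = 0)
    (hlφ : lφ = 1 / (2 * r ^ 5) * (-2 * r * a * M * P)) :
    (-(2 * M * r * a * Real.sin θ ^ 2 / S)) * lt +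
      ((r ^ 2 + a ^ 2 + 2 * M * r * a ^ 2 * Real.sin θ ^ 2 / S) * Real.sin θ ^ 2) * lφ = 0 ∧
    S * lθ = 0 :=
  kerr_tetrad_l_orthogonal_to_surface_general M a r θ S Δ P lt lθ lφ hS hSpos hΔ hlt hlθ hlφ
end
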